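/- arXiv:2006.08372 — 5 statements merged into one kernel-verified Lean document; each statement's English description precedes it below -/
import Mathlib

section
/- For any n-variable Boolean function f, if g achieves FAI(f) (i.e., g ≠ 1, f·g ≠ 0, and deg(g) + deg(f·g) = FAI(f)), then deg(f·g) ≥ deg(g). -/
open scoped BigOperators

abbrev BF (n : ℕ) := (Fin n → ZMod 2) → ZMod 2

/-- Algebraic degree of a Boolean function: the least `d` such that `f` is
represented by a multivariate polynomial of total degree at most `d`. -/
noncomputable def degB {n : ℕ} (f : BF n) : ℕ :=
  sInf {d | ∃ p : MvPolynomial (Fin n) (ZMod 2),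
    (∀ x, MvPolynomial.eval x p = f x) ∧ p.totalDegree ≤ d}

/-- Fast algebraic immunity. -/
noncomputable def FAI {n : ℕ} (f : BF n) : ℕ :=
  sInf {m | ∃ g : BF n, g ≠ 1 ∧ f * g ≠ 0 ∧ m = degB g + degB (f * g)}

/-- Minimum degree of a nonzero annihilator. -/
noncomputable def LDA {n : ℕ} (f : BF n) : ℕ :=
  sInf {m | ∃ g : BF n, g ≠ 0 ∧ f * g = 0 ∧ m = degB g}

noncomputable def AI {n : ℕ} (f : BF n) : ℕ := min (LDA f) (LDA (1 + f))

noncomputable def muk {n : ℕ} (k : ℕ) (f : BF n) : ℕ :=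
  sInf {m | ∃ g : BF n, degB g ≤ k ∧ f * g ≠ 0 ∧ m = degB (f * g)}

def wtB {n : ℕ} (f : BF n) : ℕ := (Finset.univ.filter (fun x => f x = 1)).card

def IsAffineAut {n : ℕ} (A : (Fin n → ZMod 2) → (Fin n → ZMod 2)) : Prop :=
  ∃ (L : (Fin n → ZMod 2) ≃ₗ[ZMod 2] (Fin n → ZMod 2)) (b : Fin n → ZMod 2),
    ∀ x, A x = L x + b

noncomputable def RMcode (n e : ℕ) :
    Submodule (ZMod 2) ((Fin n → ZMod 2) → ZMod 2) :=
  Submodule.span (ZMod 2) {f | ∃ p : MvPolynomial (Fin n) (ZMod 2),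
    p.totalDegree ≤ e ∧ ∀ x, MvPolynomial.eval x p = f x}

/-- The code obtained by keeping only the coordinates in `S`
(i.e. puncturing on the complement of `S`). -/
noncomputable def restrictCode {n : ℕ}
    (C : Submodule (ZMod 2) ((Fin n → ZMod 2) → ZMod 2))
    (S : Set (Fin n → ZMod 2)) : Submodule (ZMod 2) (S → ZMod 2) :=
  C.map (LinearMap.funLeft (ZMod 2) (ZMod 2) (Subtype.val : S → (Fin n → ZMod 2)))

noncomputable def dualCode {ι : Type*} [Fintype ι]
    (C : Submodule (ZMod 2) (ι → ZMod 2)) : Submodule (ZMod 2) (ι → ZMod 2) where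
  carrier := {w | ∀ c ∈ C, ∑ i, w i * c i = 0}
  add_mem' := by
    intro a b ha hb c hc
    simp only [Pi.add_apply, add_mul, Finset.sum_add_distrib, ha c hc, hb c hc, add_zero]
  zero_mem' := by intro c hc; simp
  smul_mem' := by
    intro r a ha c hc
    simp only [Pi.smul_apply, smul_eq_mul, mul_assoc, ← Finset.mul_sum, ha c hc, mul_zero]

noncomputable instance instFintypeSubsetBF {α : Type*} [Fintype α] (S : Set α) :
    Fintype ↥S := Fintype.ofFinite _

def suppB {n : ℕ} (f : BF n) : Set (Fin n → ZMod 2) := {x | f x = 1}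


/-! Since `f * f = f`, the function `f * g` is itself admissible in the definition of `FAI f`,
with the same product `f * (f * g) = f * g`; hence `FAI f ≤ 2 * degB (f * g)`. -/

section BooleanFunctions

variable {α : Type*}

theorem ZMod.two_mul_self (a : ZMod 2) : a * a = a := by
  fin_cases a <;> rfl

theorem Pi.zmod_two_mul_self (f : α → ZMod 2) : f * f = f :=
  funext fun x => ZMod.two_mul_self (f x)

theorem Pi.zmod_two_mul_mul_self_left (f g : α → ZMod 2) : f * (f * g) = f * g := by
  rw [← mul_assoc, Pi.zmod_two_mul_self]

theorem Pi.zmod_two_mul_ne_one (f : α → ZMod 2) {g : α → ZMod 2} (hg : g ≠ 1) :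
    f * g ≠ 1 := by
  intro h
  apply hg
  calc g = f * g * g := by rw [h, one_mul]
    _ = f * g := by rw [mul_assoc, Pi.zmod_two_mul_self]
    _ = 1 := h

end BooleanFunctions

theorem FAI_le_degB_add {n : ℕ} (f g : BF n) (hg : g ≠ 1) (hfg : f * g ≠ 0) :
    FAI f ≤ degB g + degB (f * g) :=
  Nat.sInf_le ⟨g, hg, hfg, rfl⟩

theorem stmt0 {n : ℕ} (f g : BF n) (hg1 : g ≠ 1) (hfg : f * g ≠ 0)
    (hach : degB g + degB (f * g) = FAI f) :
    degB g ≤ degB (f * g) := by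
  have hle := FAI_le_degB_add f (f * g) (Pi.zmod_two_mul_ne_one f hg1)
    (by rwa [Pi.zmod_two_mul_mul_self_left])
  rw [Pi.zmod_two_mul_mul_self_left] at hle
  omega
end

section
/- For any n-variable Boolean function f, min(FAI(f), FAI(1+f)) ≤ 2·AI(f). -/
open scoped BigOperators

/-!
If `g ≠ 0` annihilates `h`, then `(1 + h) * g = g`, so `g` itself witnesses
`FAI (1 + h) ≤ deg g + deg g`; taking `g` of degree `LDA h` gives `2 * LDA h`.
When `h` is `0` or `1` one of `h`, `1 + h` is `0`, and `FAI 0 = 0`.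
-/

variable {n : ℕ}

lemma FAI_zero : FAI (0 : BF n) = 0 := by
  refine Nat.sInf_eq_zero.mpr (Or.inr (Set.eq_empty_iff_forall_notMem.mpr ?_))
  rintro m ⟨g, -, hg, -⟩
  exact hg (zero_mul g)

lemma one_add_one_add (h : BF n) : 1 + (1 + h) = h := by
  rw [← add_assoc, CharTwo.add_self_eq_zero, zero_add]

lemma BF.mul_self (h : BF n) : h * h = h :=
  funext fun x => by simpa [sq] using ZMod.pow_card (h x)

lemma exists_annihilator_degB_eq_LDA {h : BF n} (h1 : h ≠ 1) :
    ∃ g : BF n, g ≠ 0 ∧ h * g = 0 ∧ degB g = LDA h := by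
  have hne : {m | ∃ g : BF n, g ≠ 0 ∧ h * g = 0 ∧ m = degB g}.Nonempty := by
    refine ⟨_, 1 + h, fun h0 => h1 ?_, ?_, rfl⟩
    · rw [← one_add_one_add h, h0, add_zero]
    · rw [mul_add, mul_one, BF.mul_self, CharTwo.add_self_eq_zero]
  obtain ⟨g, hg0, hhg, hdeg⟩ := Nat.sInf_mem hne
  exact ⟨g, hg0, hhg, hdeg.symm⟩

lemma FAI_one_add_le_of_mul_eq_zero {h g : BF n} (h0 : h ≠ 0) (hg : g ≠ 0) (hhg : h * g = 0) :
    FAI (1 + h) ≤ 2 * degB g := by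
  have hg1 : g ≠ 1 := by
    rintro rfl
    exact h0 (by rwa [mul_one] at hhg)
  have hfix : (1 + h) * g = g := by rw [add_mul, one_mul, hhg, add_zero]
  refine Nat.sInf_le ⟨g, hg1, by rwa [hfix], ?_⟩
  rw [hfix, two_mul]

lemma min_FAI_le_two_mul_LDA (h : BF n) : min (FAI h) (FAI (1 + h)) ≤ 2 * LDA h := by
  by_cases h0 : h = 0
  · simp [h0, FAI_zero]
  by_cases h1 : h = 1
  · simp [h1, CharTwo.add_self_eq_zero, FAI_zero]
  obtain ⟨g, hg, hhg, hdeg⟩ := exists_annihilator_degB_eq_LDA h1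
  exact (min_le_right _ _).trans (hdeg ▸ FAI_one_add_le_of_mul_eq_zero h0 hg hhg)

theorem stmt3 {n : ℕ} (f : BF n) :
    min (FAI f) (FAI (1 + f)) ≤ 2 * AI f := by
  rcases min_choice (LDA f) (LDA (1 + f)) with hAI | hAI <;> rw [AI, hAI]
  · exact min_FAI_le_two_mul_LDA f
  · have := min_FAI_le_two_mul_LDA (1 + f)
    rwa [one_add_one_add, min_comm] at this
end

section
/- Let f be an n-variable Boolean function. Then LDA(f) = min over 1 ≤ k ≤ n of μ_k(f+1), and moreover μ_k(f+1) = LDA(f) for all k ≥ LDA(f). -/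
open scoped BigOperators

/-!
Since `f * (f + 1) = 0`, every nonzero `(f + 1) * g` is an annihilator of `f`, so
`LDA f ≤ μ_k(f + 1)` for every `k`. Conversely an annihilator `g` of `f` satisfies
`(f + 1) * g = g`, so an annihilator of degree `LDA f ≤ k` is itself a nonzero element of
`MUL_k(f + 1)`, giving `μ_k(f + 1) ≤ LDA f`. As `LDA f ≤ n`, the minimum over `1 ≤ k ≤ n` is
attained at `k = n`. For `f = 1` there is no nonzero annihilator and `MUL_k(0) = 0`, and both
sides are `0` through the convention `sInf ∅ = 0`.
-/

lemma mul_add_one_self {X : Type*} (f : X → ZMod 2) : f * (f + 1) = 0 := by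
  funext x
  show f x * (f x + 1) = 0
  generalize f x = a
  decide +revert

lemma add_one_mul_eq_self_of_mul_eq_zero {R : Type*} [NonAssocSemiring R] {a b : R}
    (h : a * b = 0) : (a + 1) * b = b := by
  rw [add_one_mul, h, zero_add]

section BooleanFunction

variable {n : ℕ}

lemma exists_mvPolynomial_eval_eq_totalDegree_le (f : BF n) :
    ∃ p : MvPolynomial (Fin n) (ZMod 2),
      (∀ x, MvPolynomial.eval x p = f x) ∧ p.totalDegree ≤ n := by
  obtain ⟨⟨p, hp⟩, hpf⟩ :=
    LinearMap.range_eq_top.mp (MvPolynomial.range_evalᵢ (Fin n) (ZMod 2)) f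
  refine ⟨p, fun x => congrFun hpf x, Finset.sup_le fun s hs => ?_⟩
  rw [MvPolynomial.mem_restrictDegree] at hp
  calc s.sum (fun _ e => e) = ∑ i, s i := Finsupp.sum_fintype _ _ fun _ => rfl
    _ ≤ ∑ _i : Fin n, 1 := Finset.sum_le_sum fun i _ => hp s hs i
    _ = n := by simp

lemma degB_le (f : BF n) : degB f ≤ n :=
  let ⟨p, hp, hpn⟩ := exists_mvPolynomial_eval_eq_totalDegree_le f
  Nat.sInf_le ⟨p, hp, hpn⟩

lemma degB_one : degB (1 : BF n) = 0 :=
  Nat.eq_zero_of_le_zero <| Nat.sInf_le ⟨1, fun _ => map_one _, by simp⟩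

lemma LDA_le_degB {f g : BF n} (hg : g ≠ 0) (hfg : f * g = 0) : LDA f ≤ degB g :=
  Nat.sInf_le ⟨g, hg, hfg, rfl⟩

lemma LDA_eq_zero_of_add_one_eq_zero {f : BF n} (hf : f + 1 = 0) : LDA f = 0 := by
  rw [LDA, Nat.sInf_eq_zero, Set.eq_empty_iff_forall_notMem]
  refine Or.inr fun _ ⟨g, hg, hfg, _⟩ => hg ?_
  simpa [hf, eq_comm] using add_one_mul_eq_self_of_mul_eq_zero hfg

lemma exists_degB_eq_LDA {f : BF n} (hf : f + 1 ≠ 0) :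
    ∃ g : BF n, g ≠ 0 ∧ f * g = 0 ∧ degB g = LDA f := by
  obtain ⟨g, hg, hfg, hdeg⟩ := Nat.sInf_mem
    (s := {m | ∃ g : BF n, g ≠ 0 ∧ f * g = 0 ∧ m = degB g}) ⟨_, f + 1, hf, mul_add_one_self f, rfl⟩
  exact ⟨g, hg, hfg, hdeg.symm⟩

lemma LDA_le (f : BF n) : LDA f ≤ n := by
  by_cases hf : f + 1 = 0
  · simp [LDA_eq_zero_of_add_one_eq_zero hf]
  · obtain ⟨g, -, -, hdeg⟩ := exists_degB_eq_LDA hf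
    exact hdeg ▸ degB_le g

lemma muk_zero (k : ℕ) : muk k (0 : BF n) = 0 := by
  simp [muk]

lemma LDA_le_muk_add_one (k : ℕ) (f : BF n) : LDA f ≤ muk k (f + 1) := by
  by_cases hf : f + 1 = 0
  · simp [LDA_eq_zero_of_add_one_eq_zero hf]
  refine le_csInf ⟨_, 1, degB_one.trans_le k.zero_le, by rwa [mul_one], rfl⟩ ?_
  rintro _ ⟨g, -, hg, rfl⟩
  exact LDA_le_degB hg (by rw [← mul_assoc, mul_add_one_self, zero_mul])

lemma muk_add_one_le_LDA {k : ℕ} {f : BF n} (hk : LDA f ≤ k) : muk k (f + 1) ≤ LDA f := by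
  by_cases hf : f + 1 = 0
  · simp [hf, muk_zero]
  obtain ⟨g, hg, hfg, hdeg⟩ := exists_degB_eq_LDA hf
  have hg' : (f + 1) * g = g := add_one_mul_eq_self_of_mul_eq_zero hfg
  exact Nat.sInf_le ⟨g, hdeg ▸ hk, hg'.symm ▸ hg, by rw [hg', hdeg]⟩

lemma muk_add_one_eq_LDA {k : ℕ} {f : BF n} (hk : LDA f ≤ k) : muk k (f + 1) = LDA f :=
  (muk_add_one_le_LDA hk).antisymm (LDA_le_muk_add_one k f)

end BooleanFunction

theorem stmt5 {n : ℕ} (hn : 1 ≤ n) (f : BF n) :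
    LDA f = sInf {m | ∃ k, 1 ≤ k ∧ k ≤ n ∧ m = muk k (f + 1)} ∧
    ∀ k, LDA f ≤ k → muk k (f + 1) = LDA f := by
  have hmem : LDA f ∈ {m | ∃ k, 1 ≤ k ∧ k ≤ n ∧ m = muk k (f + 1)} :=
    ⟨n, hn, le_rfl, (muk_add_one_eq_LDA (LDA_le f)).symm⟩
  refine ⟨le_antisymm ?_ (Nat.sInf_le hmem), fun k => muk_add_one_eq_LDA⟩
  refine le_csInf ⟨_, hmem⟩ ?_
  rintro _ ⟨k, -, -, rfl⟩
  exact LDA_le_muk_add_one k f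
end

section
/- Let f be an n-variable nonzero Boolean function with support D. Then the all-ones vector 1_{wt(f)} is not in (RM(e',n)^{D̄})^⊥ if and only if deg(f) ≥ n − e'. -/
open scoped BigOperators

/-!
Summing over the support of `f` turns the condition `1 ∈ (RM(e', n)^{D})^⊥` into
`∑ₓ f(x) g(x) = 0` for every `g` of degree `≤ e'`. If `deg f + deg g < n`, the product `f g` has
degree `< n` and hence sums to zero over `𝔽₂ⁿ` (Chevalley–Warning). Conversely, let `x^S` be a
monomial of top degree in the multilinear representative of `f` and `g = ∏_{i ∉ S} x_i`, of
degree `n - deg f`. Summing a monomial over `𝔽₂ⁿ` gives `1` exactly when it involves every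
variable, and the only monomial of `f` that does so after multiplication by `g` is `x^S`; thus
`∑ₓ f(x) g(x) = 1`.
-/

open MvPolynomial Finset

section BooleanCube

variable {σ : Type*}

lemma Finsupp.degree_eq_card_support {m : σ →₀ ℕ} (hm : ∀ i, m i ≤ 1) :
    m.degree = #m.support := by
  rw [Finsupp.degree_apply, card_eq_sum_ones]
  refine Finset.sum_congr rfl fun i hi => ?_
  have := Finsupp.mem_support_iff.mp hi
  have := hm i
  omega

lemma Finsupp.eq_of_support_subset_of_card_le {m m' : σ →₀ ℕ} (hm : ∀ i, m i ≤ 1)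
    (hm' : ∀ i, m' i ≤ 1) (hsub : m.support ⊆ m'.support) (hcard : #m'.support ≤ #m.support) :
    m = m' := by
  have hsupp := eq_of_subset_of_card_le hsub hcard
  ext i
  have hi := hm i
  have hi' := hm' i
  have := Finset.ext_iff.mp hsupp i
  simp only [Finsupp.mem_support_iff] at this
  omega

lemma ZMod.two_pow_min_one (a : ZMod 2) (k : ℕ) : a ^ min k 1 = a ^ k := by
  have ha : IsIdempotentElem a := by
    rw [IsIdempotentElem, ← sq]; exact ZMod.pow_card a
  rcases k with _ | k
  · rfl
  · rw [Nat.min_eq_right (by omega), pow_one, ha.pow_succ_eq]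

lemma exists_mem_restrictDegree_one_eval_eq (p : MvPolynomial σ (ZMod 2)) :
    ∃ q ∈ restrictDegree σ (ZMod 2) 1,
      q.totalDegree ≤ p.totalDegree ∧ ∀ x, eval x q = eval x p := by
  let r : (σ →₀ ℕ) → σ →₀ ℕ := Finsupp.mapRange (min · 1) (by simp)
  have hr (m : σ →₀ ℕ) : r m ≤ m := fun i => min_le_left _ _
  refine ⟨∑ m ∈ p.support, monomial (r m) (p.coeff m), ?_, ?_, fun x => ?_⟩
  · exact sum_mem fun m _ =>
      (monomial_mem_restrictSupport _).mpr (Or.inl fun i => min_le_right _ _)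
  · refine (totalDegree_finsetSum _ _).trans (Finset.sup_le fun m hm => ?_)
    exact (totalDegree_monomial_le _ _).trans
      ((Finsupp.degree_mono (hr m)).trans (le_totalDegree hm))
  · conv_rhs => rw [p.as_sum]
    simp_rw [map_sum, eval_monomial, r, Finsupp.prod_mapRange_index (fun _ => pow_zero _),
      ZMod.two_pow_min_one]

lemma ZMod.sum_two_pow_eq_ite (k : ℕ) : ∑ a : ZMod 2, a ^ k = if k = 0 then 0 else 1 := by
  rcases k with _ | k
  · decide
  · simp_rw [← ZMod.two_pow_min_one _ (k + 1), Nat.min_eq_right (Nat.le_add_left 1 k), pow_one,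
      if_neg (Nat.succ_ne_zero k)]
    decide

variable [Fintype σ] [DecidableEq σ]

lemma sum_prod_pow_eq_ite (k : σ → ℕ) :
    ∑ x : σ → ZMod 2, ∏ i, x i ^ k i = if ∀ i, k i ≠ 0 then 1 else 0 := by
  rw [← Fintype.prod_sum (fun i (a : ZMod 2) => a ^ k i)]
  simp_rw [ZMod.sum_two_pow_eq_ite]
  split_ifs with h
  · exact prod_eq_one fun i _ => if_neg (h i)
  · push Not at h
    obtain ⟨i, hi⟩ := h
    exact prod_eq_zero (mem_univ i) (if_pos hi)

lemma sum_eval_mul_prod_eq_sum_coeff (p : MvPolynomial σ (ZMod 2)) (T : Finset σ) :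
    ∑ x : σ → ZMod 2, eval x p * ∏ i ∈ T, x i =
      ∑ m ∈ p.support with ∀ i ∉ T, m i ≠ 0, p.coeff m := by
  have hmonomial (m : σ →₀ ℕ) (x : σ → ZMod 2) :
      (∏ i, x i ^ m i) * ∏ i ∈ T, x i = ∏ i, x i ^ (m i + if i ∈ T then 1 else 0) := by
    simp_rw [pow_add, prod_mul_distrib, pow_ite, pow_one, pow_zero, prod_ite_mem, univ_inter]
  have hcover (m : σ →₀ ℕ) : (∀ i, m i + (if i ∈ T then 1 else 0) ≠ 0) ↔ ∀ i ∉ T, m i ≠ 0 :=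
    forall_congr' fun i => by by_cases hi : i ∈ T <;> simp [hi]
  calc ∑ x : σ → ZMod 2, eval x p * ∏ i ∈ T, x i
      = ∑ m ∈ p.support, p.coeff m *
          ∑ x : σ → ZMod 2, ∏ i, x i ^ (m i + if i ∈ T then 1 else 0) := by
        simp_rw [eval_eq', sum_mul, mul_assoc, hmonomial, mul_sum]
        exact sum_comm
    _ = _ := by
        simp_rw [sum_prod_pow_eq_ite, hcover, mul_ite, mul_one, mul_zero, ← sum_filter]

lemma sum_eval_mul_prod_compl_support {q : MvPolynomial σ (ZMod 2)}
    (hq : q ∈ restrictDegree σ (ZMod 2) 1) {m : σ →₀ ℕ} (hm : m ∈ q.support)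
    (hdeg : q.totalDegree ≤ m.degree) :
    ∑ x : σ → ZMod 2, eval x q * ∏ i ∈ m.supportᶜ, x i = q.coeff m := by
  have hml := (mem_restrictDegree _ _ _).mp hq
  suffices {m' ∈ q.support | ∀ i ∉ m.supportᶜ, m' i ≠ 0} = {m} by
    rw [sum_eval_mul_prod_eq_sum_coeff, this, sum_singleton]
  ext m'
  simp only [mem_filter, mem_singleton, mem_compl, not_not, ← Finsupp.mem_support_iff]
  constructor
  · rintro ⟨hm', hsub⟩
    refine (Finsupp.eq_of_support_subset_of_card_le (hml m hm) (hml m' hm') hsub ?_).symm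
    rw [← Finsupp.degree_eq_card_support (hml m hm),
      ← Finsupp.degree_eq_card_support (hml m' hm')]
    exact (le_totalDegree hm').trans hdeg
  · rintro rfl
    exact ⟨hm, fun i hi => hi⟩

end BooleanCube

universe u

lemma MvPolynomial.exists_eval_eq {K σ : Type u} [Field K] [Fintype K] [Finite σ]
    (f : (σ → K) → K) : ∃ p : MvPolynomial σ K, ∀ x, eval x p = f x := by
  obtain ⟨p, hp⟩ := LinearMap.range_eq_top.mp (range_evalᵢ σ K) f
  exact ⟨p.1, congrFun hp⟩

lemma mem_dualCode_span_iff {ι : Type*} [Fintype ι] {w : ι → ZMod 2}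
    {s : Set (ι → ZMod 2)} :
    w ∈ dualCode (Submodule.span (ZMod 2) s) ↔ ∀ c ∈ s, ∑ i, w i * c i = 0 :=
  Submodule.span_le (p := LinearMap.ker (dotProductBilin (ZMod 2) (ZMod 2) w))

section BooleanFunction

variable {n : ℕ}

lemma exists_eval_eq_totalDegree_le_degB (f : BF n) :
    ∃ p : MvPolynomial (Fin n) (ZMod 2), (∀ x, eval x p = f x) ∧ p.totalDegree ≤ degB f := by
  obtain ⟨p, hp⟩ := exists_eval_eq f
  exact Nat.sInf_mem (s := {d | ∃ p : MvPolynomial (Fin n) (ZMod 2),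
    (∀ x, eval x p = f x) ∧ p.totalDegree ≤ d}) ⟨_, p, hp, le_rfl⟩

lemma degB_le_totalDegree {f : BF n} {p : MvPolynomial (Fin n) (ZMod 2)}
    (hp : ∀ x, eval x p = f x) : degB f ≤ p.totalDegree :=
  Nat.sInf_le ⟨p, hp, le_rfl⟩

lemma exists_mem_restrictDegree_one_totalDegree_eq_degB (f : BF n) :
    ∃ q ∈ restrictDegree (Fin n) (ZMod 2) 1, q.totalDegree = degB f ∧ ∀ x, eval x q = f x := by
  obtain ⟨p, hpf, hpdeg⟩ := exists_eval_eq_totalDegree_le_degB f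
  obtain ⟨q, hq, hqdeg, hqp⟩ := exists_mem_restrictDegree_one_eval_eq p
  have hqf (x) : eval x q = f x := (hqp x).trans (hpf x)
  exact ⟨q, hq, (hqdeg.trans hpdeg).antisymm (degB_le_totalDegree hqf), hqf⟩

lemma sum_suppB_eq_sum_mul (f g : BF n) : ∑ x : suppB f, g x = ∑ x, f x * g x := by
  have hf (x) : f x * g x = if f x = 1 then g x else 0 := by
    rcases (show ∀ a : ZMod 2, a = 0 ∨ a = 1 by decide) (f x) with h | h <;> simp [h]
  simp_rw [hf, ← sum_filter]
  exact (sum_subtype _ (fun x => by simp [suppB]) g).symm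

lemma one_mem_dualCode_restrictCode_RMcode_iff (e : ℕ) (f : BF n) :
    (fun _ => 1 : suppB f → ZMod 2) ∈ dualCode (restrictCode (RMcode n e) (suppB f)) ↔
      ∀ p : MvPolynomial (Fin n) (ZMod 2), p.totalDegree ≤ e → ∑ x, f x * eval x p = 0 := by
  rw [restrictCode, RMcode, Submodule.map_span, mem_dualCode_span_iff]
  simp only [Set.forall_mem_image, Set.mem_ofPred_eq, forall_exists_index, and_imp, one_mul,
    LinearMap.funLeft_apply, sum_suppB_eq_sum_mul]
  exact ⟨fun h p hp => h p hp fun _ => rfl, fun h g p hp hpg => by simpa only [hpg] using h p hp⟩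

lemma sum_mul_eval_eq_zero_of_degB_add_lt {f : BF n} {p : MvPolynomial (Fin n) (ZMod 2)}
    (h : degB f + p.totalDegree < n) : ∑ x, f x * eval x p = 0 := by
  obtain ⟨pf, hpf, hdeg⟩ := exists_eval_eq_totalDegree_le_degB f
  simp_rw [← hpf, ← eval_mul]
  refine sum_eval_eq_zero _ ?_
  rw [ZMod.card, Fintype.card_fin]
  have := totalDegree_mul pf p
  omega

lemma exists_totalDegree_le_sum_mul_eval_ne_zero {f : BF n} (hf : f ≠ 0) :
    ∃ p : MvPolynomial (Fin n) (ZMod 2),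
      p.totalDegree ≤ n - degB f ∧ ∑ x, f x * eval x p ≠ 0 := by
  obtain ⟨q, hq, hqdeg, hqf⟩ := exists_mem_restrictDegree_one_totalDegree_eq_degB f
  have hq0 : q ≠ 0 := by
    rintro rfl
    exact hf (funext fun x => by simp [← hqf x])
  obtain ⟨m, hm, hmdeg⟩ := exists_mem_eq_sup q.support (support_nonempty.mpr hq0) Finsupp.degree
  change q.totalDegree = m.degree at hmdeg
  refine ⟨∏ i ∈ m.supportᶜ, X i, ?_, ?_⟩
  · refine (totalDegree_finsetProd _ _).trans ?_
    simp_rw [totalDegree_X, sum_const, smul_eq_mul, mul_one, card_compl, Fintype.card_fin,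
      ← hqdeg, hmdeg, Finsupp.degree_eq_card_support ((mem_restrictDegree _ _ _).mp hq m hm),
      le_refl]
  · simp_rw [← hqf, map_prod, eval_X, sum_eval_mul_prod_compl_support hq hm hmdeg.le]
    exact mem_support_iff.mp hm

end BooleanFunction

theorem stmt15 {n : ℕ} (e' : ℕ) (f : BF n) (hf : f ≠ 0) :
    (fun _ => 1 : ↥(suppB f) → ZMod 2) ∉
        dualCode (restrictCode (RMcode n e') (suppB f)) ↔
      n - e' ≤ degB f := by
  rw [one_mem_dualCode_restrictCode_RMcode_iff]
  push Not
  constructor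
  · rintro ⟨p, hp, hsum⟩
    by_contra! hdeg
    exact hsum (sum_mul_eval_eq_zero_of_degB_add_lt (by omega))
  · intro hdeg
    obtain ⟨p, hp, hsum⟩ := exists_totalDegree_le_sum_mul_eval_ne_zero hf
    exact ⟨p, by omega, hsum⟩
end

section
/- Let C be an even-like binary linear code with parameters [ℓ, k]. If C is LCD, then k is even. -/
open scoped BigOperators

/-! Over `𝔽₂` we have `c ⬝ᵥ c = ∑ i, c i`, so the dot product restricted to an even-like code is
alternating, and the LCD condition says exactly that this restriction is nondegenerate. A
nondegenerate alternating form lives only in even dimension: pick `x, y` with `B x y ≠ 0`, split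
off the plane `span {x, y}`, on which `B` is nondegenerate, and induct on its orthogonal
complement, whose dimension is two less. -/

open LinearMap (BilinForm)
open Module

namespace LinearMap.BilinForm.IsAlt

variable {K V : Type*} [Field K] [AddCommGroup V] [Module K V] {B : BilinForm K V}

theorem eq_zero_of_apply_smul_add_smul (hB : B.IsAlt) {x y : V} (hxy : B x y ≠ 0) {a b : K}
    (hx : B x (a • x + b • y) = 0) (hy : B y (a • x + b • y) = 0) : a = 0 ∧ b = 0 := by
  have hyx : B y x ≠ 0 := fun h => hxy (hB.eq_iff.mp h)
  simp only [map_add, map_smul, smul_eq_mul, hB.self_eq_zero, mul_zero, add_zero, zero_add]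
    at hx hy
  exact ⟨(mul_eq_zero.mp hy).resolve_right hyx, (mul_eq_zero.mp hx).resolve_right hxy⟩

theorem finrank_span_pair (hB : B.IsAlt) {x y : V} (hxy : B x y ≠ 0) :
    finrank K (Submodule.span K {x, y}) = 2 := by
  have hli : LinearIndependent K ![x, y] :=
    LinearIndependent.pair_iff.mpr fun s t hst =>
      hB.eq_zero_of_apply_smul_add_smul hxy (by simp [hst]) (by simp [hst])
  have h := finrank_span_eq_card hli
  rw [Matrix.range_cons_cons_empty] at h
  simpa using h

theorem nondegenerate_restrict_span_pair (hB : B.IsAlt) {x y : V} (hxy : B x y ≠ 0) :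
    (B.restrict (Submodule.span K {x, y})).Nondegenerate := by
  refine B.nondegenerate_restrict_of_disjoint_orthogonal hB.isRefl ?_
  refine Submodule.disjoint_def.mpr fun w hw hw_orth => ?_
  obtain ⟨a, b, rfl⟩ := Submodule.mem_span_pair.mp hw
  obtain ⟨rfl, rfl⟩ := hB.eq_zero_of_apply_smul_add_smul hxy
    (hw_orth x (Submodule.subset_span (by simp))) (hw_orth y (Submodule.subset_span (by simp)))
  simp

theorem even_finrank [FiniteDimensional K V] (hB : B.IsAlt) (hnd : B.Nondegenerate) :
    Even (finrank K V) := by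
  induction hn : finrank K V using Nat.strong_induction_on generalizing V with
  | _ n ih =>
    rcases Nat.eq_zero_or_pos n with rfl | hpos
    · exact Even.zero
    have : Nontrivial V := Module.nontrivial_of_finrank_pos (R := K) (hn ▸ hpos)
    obtain ⟨x, hx⟩ := exists_ne (0 : V)
    obtain ⟨y, hxy⟩ : ∃ y, B x y ≠ 0 := by
      by_contra! h
      exact hx (hnd.1 x h)
    set W := Submodule.span K {x, y}
    have hW : finrank K W = 2 := hB.finrank_span_pair hxy
    have hWperp : finrank K (B.orthogonal W) = n - 2 := by
      rw [finrank_orthogonal hnd, hn, hW]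
    have hndW : (B.restrict (B.orthogonal W)).Nondegenerate := by
      rw [restrict_nondegenerate_iff_isCompl_orthogonal hB.isRefl,
        orthogonal_orthogonal hnd hB.isRefl]
      exact (isCompl_orthogonal_of_restrict_nondegenerate hB.isRefl
        (hB.nondegenerate_restrict_span_pair hxy)).symm
    have h2n : 2 ≤ n := hn ▸ hW ▸ Submodule.finrank_le W
    obtain ⟨m, hm⟩ := ih (n - 2) (by omega) (B := B.restrict (B.orthogonal W))
      (fun z => hB z) hndW hWperp
    exact ⟨m + 1, by omega⟩

end LinearMap.BilinForm.IsAlt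

section BinaryCode

variable {ι : Type*} [Fintype ι] {C : Submodule (ZMod 2) (ι → ZMod 2)}

theorem isAlt_restrict_dotProductBilin (hC : ∀ c ∈ C, ∑ i, c i = 0) :
    (LinearMap.BilinForm.restrict (dotProductBilin (ZMod 2) (ZMod 2)) C).IsAlt := by
  intro c
  have hsq : ∀ a : ZMod 2, a * a = a := by decide
  simpa [dotProduct, hsq] using hC c c.2

theorem nondegenerate_restrict_dotProductBilin (hC : C ⊓ dualCode C = ⊥) :
    (LinearMap.BilinForm.restrict (dotProductBilin (ZMod 2) (ZMod 2)) C).Nondegenerate := by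
  have hsymm : (LinearMap.BilinForm.restrict (dotProductBilin (ZMod 2) (ZMod 2)) C).IsSymm :=
    ⟨fun c d => dotProduct_comm (c : ι → ZMod 2) d⟩
  refine (LinearMap.IsRefl.nondegenerate_iff_separatingLeft hsymm.isRefl).mpr fun c hc => ?_
  have hmem : (c : ι → ZMod 2) ∈ C ⊓ dualCode C := ⟨c.2, fun d hd => hc ⟨d, hd⟩⟩
  rw [hC] at hmem
  exact Subtype.ext hmem

end BinaryCode

theorem stmt19 {ℓ k : ℕ} (C : Submodule (ZMod 2) (Fin ℓ → ZMod 2))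
    (hdim : Module.finrank (ZMod 2) C = k)
    (hevenlike : ∀ c ∈ C, ∑ i, c i = 0)
    (hLCD : C ⊓ dualCode C = ⊥) :
    Even k :=
  hdim ▸ (isAlt_restrict_dotProductBilin hevenlike).even_finrank
    (nondegenerate_restrict_dotProductBilin hLCD)
end
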